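/- For each K in T_n, the graph Γ(K) is a tree. -/

import Mathlib

/-- `IsTn n S` : the finset `S` of `n`-simplices (each a finset of `n+1` vertices)
forms a complex in the class `𝒯ₙ`: the smallest class of `n`-dimensional complexes
containing the `n`-simplex and closed under gluing two members along an
`(n-1)`-simplex.  Equivalently, the complex is built by starting from one
`n`-simplex and repeatedly gluing a fresh `n`-simplex along an `(n-1)`-face of
the complex built so far (the opposite vertex being new). -/
inductive IsTn {V : Type} [DecidableEq V] (n : ℕ) : Finset (Finset V) → Prop
  | single (s : Finset V) (h : s.card = n + 1) : IsTn n {s}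
  | glue (S : Finset (Finset V)) (s f : Finset V) (v : V) :
      IsTn n S → s ∈ S → f ⊆ s → f.card = n → (∀ t ∈ S, v ∉ t) →
      IsTn n (insert (insert v f) S)

/-- The 1-skeleton of the complex with set of maximal simplices `S`. -/
def skeleton {V : Type} [DecidableEq V] (S : Finset (Finset V)) : SimpleGraph V where
  Adj v w := v ≠ w ∧ ∃ s ∈ S, v ∈ s ∧ w ∈ s
  symm := by
    constructor; rintro v w ⟨h, s, hs, hv, hw⟩
    exact ⟨Ne.symm h, s, hs, hw, hv⟩
  loopless := by constructor; rintro v ⟨h, -⟩; exact h rfl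

/-- `f` is (the spine of) a piece of the complex `S`: an `(n-1)`-simplex which is a
face of at least two `n`-simplices. -/
def IsPiece {V : Type} [DecidableEq V] (S : Finset (Finset V)) (n : ℕ) (f : Finset V) : Prop :=
  f.card = n ∧ 2 ≤ (S.filter (fun s => f ⊆ s)).card

instance {V : Type} [DecidableEq V] (S : Finset (Finset V)) (n : ℕ) :
    DecidablePred (IsPiece S n) := fun f =>
  decidable_of_iff (f.card = n ∧ 2 ≤ (S.filter (fun s => f ⊆ s)).card) Iff.rfl

/-- p-vertices of `Γ(K)`: the pieces of the complex. -/
def PVert {V : Type} [DecidableEq V] (S : Finset (Finset V)) (n : ℕ) : Type :=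
  {f : Finset V // IsPiece S n f}

/-- f-vertices of `Γ(K)`: the `n`-simplices lying in more than one piece. -/
def FVert {V : Type} [DecidableEq V] (S : Finset (Finset V)) (n : ℕ) : Type :=
  {s : Finset V // s ∈ S ∧ 2 ≤ ((s.powersetCard n).filter (fun f => IsPiece S n f)).card}

/-- The graph `Γ(K)`: a p-vertex (piece) is adjacent to an f-vertex (simplex) iff the
simplex contains the spine of the piece. -/
def Gamma {V : Type} [DecidableEq V] (S : Finset (Finset V)) (n : ℕ) :
    SimpleGraph (PVert S n ⊕ FVert S n) where
  Adj a b :=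
    match a, b with
    | .inl p, .inr t => p.1 ⊆ t.1
    | .inr t, .inl p => p.1 ⊆ t.1
    | _, _ => False
  symm := by constructor; rintro (p | t) (p' | t') h <;> simp_all
  loopless := by constructor; rintro (p | t) h <;> simp_all

/-!
Work in the full incidence graph `B(K)` between all pieces and all `n`-simplices of `K`.
Gluing a new simplex `T = f ∪ {v}` onto `s ⊇ f` adds `f` as a piece hanging off `s` (unless
it already was a piece, in which case the edge `f — s` is already there) and then `T` as a
leaf hanging off `f`, so `B(K)` stays a tree. `Γ(K)` is the subgraph of `B(K)` induced by
deleting the simplices lying in at most one piece; these have degree at most one, so no path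
of `B(K)` between vertices of `Γ(K)` passes through them.
-/

namespace SimpleGraph

variable {W W' : Type*} {G : SimpleGraph W}

structure IsTreeOn (G : SimpleGraph W) (P : Set W) : Prop where
  isAcyclic : G.IsAcyclic
  reachable : ∀ a ∈ P, ∀ b ∈ P, G.Reachable a b
  mem_of_adj : ∀ ⦃a b⦄, G.Adj a b → a ∈ P

theorem IsTreeOn.sup_edge {P : Set W} {x y : W} (hG : G.IsTreeOn P) (hy : y ∈ P) (hxy : x ≠ y)
    (hx : x ∈ P → G.Adj x y) : (G ⊔ edge x y).IsTreeOn (insert x P) := by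
  by_cases hxP : x ∈ P
  · rwa [sup_edge_of_adj G (hx hxP), Set.insert_eq_of_mem hxP]
  have hxy' : (G ⊔ edge x y).Adj x y := Or.inr ((edge_adj _ _ _ _).mpr ⟨Or.inl ⟨rfl, rfl⟩, hxy⟩)
  have hreach : ∀ a ∈ insert x P, (G ⊔ edge x y).Reachable a y := by
    rintro a (rfl | ha)
    · exact hxy'.reachable
    · exact (hG.reachable a ha y hy).mono le_sup_left
  refine ⟨hG.isAcyclic.sup_edge_of_not_reachable fun h => ?_,
    fun a ha b hb => (hreach a ha).trans (hreach b hb).symm, ?_⟩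
  · obtain ⟨p⟩ := h
    cases p with
    | nil => exact hxy rfl
    | cons h _ => exact hxP (hG.mem_of_adj h)
  · rintro a b (h | h)
    · exact Set.mem_insert_of_mem x (hG.mem_of_adj h)
    · obtain ⟨⟨rfl, -⟩ | ⟨rfl, -⟩, -⟩ := (edge_adj _ _ _ _).mp h
      · exact Set.mem_insert a P
      · exact Set.mem_insert_of_mem x hy

theorem Embedding.reachable_of_reachable_map {H : SimpleGraph W'} (φ : H ↪g G)
    (hφ : ∀ x ∉ Set.range φ, (G.neighborSet x).Subsingleton) {a b : W'}
    (h : G.Reachable (φ a) (φ b)) : H.Reachable a b := by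
  obtain ⟨p, hp⟩ := h.exists_isPath
  suffices ∀ {u w} (p : G.Walk u w), p.IsPath → ∀ a b, u = φ a → w = φ b → H.Reachable a b from
    this p hp a b rfl rfl
  intro u w p
  induction p with
  | nil =>
    rintro - a b rfl hb
    rw [φ.injective hb]
  | @cons u x w hux q ih =>
    rintro hp a b rfl rfl
    rw [Walk.cons_isPath_iff] at hp
    obtain ⟨c, rfl⟩ : x ∈ Set.range φ := by
      by_contra hx
      cases q with
      | nil => exact hx ⟨b, rfl⟩
      | cons hxy q' =>
        -- a path through `x` meets two distinct neighbours of `x`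
        exact hp.2 (by rw [hφ x hx hux.symm hxy]; simp)
    exact (φ.map_adj_iff.mp hux).reachable.trans (ih hp.1 c b rfl rfl)

end SimpleGraph

section Incidence

open SimpleGraph

variable {V : Type} [DecidableEq V] {n : ℕ} {S : Finset (Finset V)}

/-- The graph `B(K)`: a vertex `.inl p` stands for a piece and `.inr t` for an `n`-simplex;
`incidenceVerts n S` are the genuine vertices, all others are isolated. -/
def incidenceGraph (n : ℕ) (S : Finset (Finset V)) : SimpleGraph (Finset V ⊕ Finset V) where
  Adj a b :=
    match a, b with
    | .inl p, .inr t => IsPiece S n p ∧ t ∈ S ∧ p ⊆ t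
    | .inr t, .inl p => IsPiece S n p ∧ t ∈ S ∧ p ⊆ t
    | _, _ => False
  symm := by constructor; rintro (p | t) (p' | t') h <;> exact h
  loopless := by constructor; rintro (p | t) h <;> exact h

def incidenceVerts (n : ℕ) (S : Finset (Finset V)) : Set (Finset V ⊕ Finset V) :=
  {x | x.elim (IsPiece S n) (· ∈ S)}

@[simp]
theorem incidenceGraph_adj_inl_inr {p t : Finset V} :
    (incidenceGraph n S).Adj (.inl p) (.inr t) ↔ IsPiece S n p ∧ t ∈ S ∧ p ⊆ t := Iff.rfl

@[simp]
theorem incidenceGraph_adj_inr_inl {p t : Finset V} :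
    (incidenceGraph n S).Adj (.inr t) (.inl p) ↔ IsPiece S n p ∧ t ∈ S ∧ p ⊆ t := Iff.rfl

@[simp]
theorem incidenceGraph_not_adj_inl_inl {p q : Finset V} :
    ¬ (incidenceGraph n S).Adj (.inl p) (.inl q) := id

@[simp]
theorem incidenceGraph_not_adj_inr_inr {s t : Finset V} :
    ¬ (incidenceGraph n S).Adj (.inr s) (.inr t) := id

theorem IsPiece.exists_mem_superset {p : Finset V} (hp : IsPiece S n p) : ∃ t ∈ S, p ⊆ t := by
  obtain ⟨t, ht⟩ := Finset.card_pos.mp (lt_of_lt_of_le two_pos hp.2)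
  exact ⟨t, (Finset.mem_filter.mp ht).1, (Finset.mem_filter.mp ht).2⟩

theorem not_isPiece_singleton {s p : Finset V} : ¬ IsPiece {s} n p := fun hp =>
  absurd (hp.2.trans (Finset.card_le_card (Finset.filter_subset _ _))) (by simp)

theorem isTreeOn_incidenceGraph_singleton {s : Finset V} :
    (incidenceGraph n {s}).IsTreeOn (incidenceVerts n {s}) := by
  have hadj : ∀ a b, ¬ (incidenceGraph n {s}).Adj a b := by
    rintro (p | t) (p' | t') h
    exacts [h, not_isPiece_singleton h.1, not_isPiece_singleton h.1, h]
  refine ⟨fun _ c hc => ?_, ?_, fun a b h => (hadj a b h).elim⟩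
  · cases c with
    | nil => exact hc.ne_nil rfl
    | cons h _ => exact hadj _ _ h
  · rintro (p | t) ha (p' | t') hb
    · exact (not_isPiece_singleton ha).elim
    · exact (not_isPiece_singleton ha).elim
    · exact (not_isPiece_singleton hb).elim
    · rw [Finset.mem_singleton.mp ha, Finset.mem_singleton.mp hb]

section Glue

variable {s f : Finset V} {v : V}

theorem isPiece_glue_iff (hs : s ∈ S) (hfs : f ⊆ s) (hf : f.card = n) (hv : ∀ t ∈ S, v ∉ t)
    {p : Finset V} : IsPiece (insert (insert v f) S) n p ↔ p = f ∨ IsPiece S n p := by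
  have hT : insert v f ∉ S := fun h => hv _ h (Finset.mem_insert_self v f)
  unfold IsPiece
  rw [Finset.filter_insert]
  split_ifs with hpT
  · rw [Finset.card_insert_of_notMem (by simp [hT])]
    by_cases hvp : v ∈ p
    · have hempty : S.filter (p ⊆ ·) = ∅ :=
        Finset.filter_eq_empty_iff.mpr fun t ht hpt => hv t ht (hpt hvp)
      have hpf : p ≠ f := fun h => hv s hs (hfs (h ▸ hvp))
      simp [hempty, hpf]
    · have hpf : p ⊆ f := (Finset.subset_insert_iff_of_notMem hvp).mp hpT
      have hcard : p.card = n → p = f := fun hp =>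
        Finset.eq_of_subset_of_card_le hpf (by rw [hf, hp])
      have hfS : 0 < (S.filter (f ⊆ ·)).card :=
        Finset.card_pos.mpr ⟨s, Finset.mem_filter.mpr ⟨hs, hfs⟩⟩
      constructor
      · rintro ⟨hp, -⟩
        exact .inl (hcard hp)
      · rintro (rfl | ⟨hp, -⟩)
        · exact ⟨hf, by omega⟩
        · obtain rfl := hcard hp
          exact ⟨hf, by omega⟩
  · have hpf : p ≠ f := by rintro rfl; exact hpT (Finset.subset_insert v p)
    simp [hpf]

theorem eq_of_isPiece_of_subset_glue (hf : f.card = n) (hv : ∀ t ∈ S, v ∉ t) {p : Finset V}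
    (hp : IsPiece S n p) (hpT : p ⊆ insert v f) : p = f := by
  obtain ⟨t, ht, hpt⟩ := hp.exists_mem_superset
  have hpf : p ⊆ f := (Finset.subset_insert_iff_of_notMem fun h => hv t ht (hpt h)).mp hpT
  exact Finset.eq_of_subset_of_card_le hpf (by rw [hf, hp.1])

theorem eq_of_subset_of_not_isPiece (hs : s ∈ S) (hfs : f ⊆ s) (hf : f.card = n)
    (hnot : ¬ IsPiece S n f) {t : Finset V} (ht : t ∈ S) (hft : f ⊆ t) : t = s := by
  by_contra hts
  exact hnot ⟨hf, Finset.one_lt_card.mpr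
    ⟨t, Finset.mem_filter.mpr ⟨ht, hft⟩, s, Finset.mem_filter.mpr ⟨hs, hfs⟩, hts⟩⟩

theorem incidenceGraph_glue (hs : s ∈ S) (hfs : f ⊆ s) (hf : f.card = n) (hv : ∀ t ∈ S, v ∉ t) :
    incidenceGraph n (insert (insert v f) S) =
      incidenceGraph n S ⊔ edge (.inl f) (.inr s) ⊔ edge (.inr (insert v f)) (.inl f) := by
  have key : ∀ p t, IsPiece (insert (insert v f) S) n p ∧ (t = insert v f ∨ t ∈ S) ∧ p ⊆ t ↔
      ((IsPiece S n p ∧ t ∈ S ∧ p ⊆ t) ∨ (p = f ∧ t = s)) ∨ (p = f ∧ t = insert v f) := by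
    intro p t
    constructor
    · rintro ⟨hp, rfl | ht, hpt⟩
      · refine .inr ⟨?_, rfl⟩
        rcases (isPiece_glue_iff hs hfs hf hv).mp hp with rfl | hp
        exacts [rfl, eq_of_isPiece_of_subset_glue hf hv hp hpt]
      · rcases (isPiece_glue_iff hs hfs hf hv).mp hp with rfl | hp
        · by_cases hpS : IsPiece S n p
          · exact .inl (.inl ⟨hpS, ht, hpt⟩)
          · exact .inl (.inr ⟨rfl, eq_of_subset_of_not_isPiece hs hfs hf hpS ht hpt⟩)
        · exact .inl (.inl ⟨hp, ht, hpt⟩)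
    · rintro ((⟨hp, ht, hpt⟩ | ⟨rfl, rfl⟩) | ⟨rfl, rfl⟩)
      · exact ⟨(isPiece_glue_iff hs hfs hf hv).mpr (.inr hp), .inr ht, hpt⟩
      · exact ⟨(isPiece_glue_iff hs hfs hf hv).mpr (.inl rfl), .inr hs, hfs⟩
      · exact ⟨(isPiece_glue_iff hs hfs hf hv).mpr (.inl rfl), .inl rfl, Finset.subset_insert _ _⟩
  ext (p | t) (p' | t')
  · simp [edge_adj]
  · simpa [edge_adj] using key p t'
  · simpa [edge_adj, and_comm] using key p' t
  · simp [edge_adj]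

theorem incidenceVerts_glue (hs : s ∈ S) (hfs : f ⊆ s) (hf : f.card = n) (hv : ∀ t ∈ S, v ∉ t) :
    incidenceVerts n (insert (insert v f) S) =
      insert (.inr (insert v f)) (insert (.inl f) (incidenceVerts n S)) := by
  ext (p | t) <;> simp [incidenceVerts, isPiece_glue_iff hs hfs hf hv]

end Glue

theorem IsTn.isTreeOn_incidenceGraph (hS : IsTn n S) :
    (incidenceGraph n S).IsTreeOn (incidenceVerts n S) := by
  induction hS with
  | single s _ => exact isTreeOn_incidenceGraph_singleton
  | glue S s f v _ hs hfs hf hv ih =>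
    rw [incidenceGraph_glue hs hfs hf hv, incidenceVerts_glue hs hfs hf hv]
    refine (ih.sup_edge (x := .inl f) (y := .inr s) hs (by simp) fun hfS =>
      incidenceGraph_adj_inl_inr.mpr ⟨hfS, hs, hfs⟩).sup_edge
      (x := .inr (insert v f)) (Set.mem_insert _ _) (by simp) ?_
    rintro (h | h)
    · simp at h
    · exact (hv _ h (Finset.mem_insert_self v f)).elim

def gammaEmbedding (S : Finset (Finset V)) (n : ℕ) : Gamma S n ↪g incidenceGraph n S where
  toFun := Sum.map Subtype.val Subtype.val
  inj' := Sum.map_injective.mpr ⟨Subtype.val_injective, Subtype.val_injective⟩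
  map_rel_iff' := by
    rintro (⟨p, hp⟩ | ⟨t, ht⟩) (⟨p', hp'⟩ | ⟨t', ht'⟩)
    · exact Iff.rfl
    · exact ⟨fun h => h.2.2, fun h => ⟨hp, ht'.1, h⟩⟩
    · exact ⟨fun h => h.2.2, fun h => ⟨hp', ht.1, h⟩⟩
    · exact Iff.rfl

theorem gammaEmbedding_mem_incidenceVerts (a : PVert S n ⊕ FVert S n) :
    gammaEmbedding S n a ∈ incidenceVerts n S := by
  rcases a with ⟨p, hp⟩ | ⟨t, ht⟩
  exacts [hp, ht.1]

theorem subsingleton_neighborSet_of_notMem_range {x : Finset V ⊕ Finset V}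
    (hx : x ∉ Set.range (gammaEmbedding S n)) :
    ((incidenceGraph n S).neighborSet x).Subsingleton := by
  rcases x with p | t
  · rintro (p' | t') h
    · exact h.elim
    · exact (hx ⟨.inl ⟨p, h.1⟩, rfl⟩).elim
  have hfew : t ∈ S → ((t.powersetCard n).filter (IsPiece S n)).card ≤ 1 := fun ht =>
    Nat.le_of_lt_succ (not_le.mp fun h2 => hx ⟨.inr ⟨t, ht, h2⟩, rfl⟩)
  rintro (p | t₁) ⟨hp, ht, hpt⟩ (q | t₂) ⟨hq, -, hqt⟩
  have hmem : ∀ {r}, IsPiece S n r → r ⊆ t → r ∈ (t.powersetCard n).filter (IsPiece S n) :=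
    fun hr hrt => Finset.mem_filter.mpr ⟨Finset.mem_powersetCard.mpr ⟨hrt, hr.1⟩, hr⟩
  exact congrArg Sum.inl (Finset.card_le_one.mp (hfew ht) p (hmem hp hpt) q (hmem hq hqt))

end Incidence

/-- for every `K ∈ 𝒯ₙ`, the graph `Γ(K)` is a tree (acyclic and any two
vertices are connected by a path). -/
theorem gamma_isTree {V : Type} [DecidableEq V] {n : ℕ}
    {S : Finset (Finset V)} (hS : IsTn n S) :
    (Gamma S n).IsAcyclic ∧ ∀ a b : PVert S n ⊕ FVert S n, (Gamma S n).Reachable a b := by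
  have hB := hS.isTreeOn_incidenceGraph
  refine ⟨hB.isAcyclic.embedding (gammaEmbedding S n), fun a b => ?_⟩
  exact (gammaEmbedding S n).reachable_of_reachable_map
    (fun _ => subsingleton_neighborSet_of_notMem_range)
    (hB.reachable _ (gammaEmbedding_mem_incidenceVerts a) _ (gammaEmbedding_mem_incidenceVerts b))
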